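/- A group Γ is Jordan if there exists a constant C such that every finite subgroup G of Γ contains an abelian subgroup A with index [G : A] ≤ C. If a group Γ contains, for every positive integer n, a subgroup isomorphic to the Heisenberg group Γ_n (mod n Heisenberg group), then Γ is not Jordan. -/

import Mathlib

/-!
If `Γ` were `C`-Jordan, choose a prime `p > C`. The Heisenberg group `Γ_p` has order `p ^ 3`, so
every proper subgroup of it has index divisible by `p`, hence at least `p > C`. An abelian
subgroup of index at most `C` in (a copy of) `Γ_p` would therefore be all of `Γ_p`, but `Γ_p` is
not abelian.
-/

/-- The mod-`n` Heisenberg group, as triples `(a, b, c)` of elements of `ZMod n`,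
where `(a,b,c)` corresponds to the unipotent upper triangular matrix
`![![1, a, c], ![0, 1, b], ![0, 0, 1]]`. -/
def Heisenberg (n : ℕ) : Type := ZMod n × ZMod n × ZMod n

namespace Heisenberg

variable {n : ℕ}

instance : Mul (Heisenberg n) :=
  ⟨fun x y => (x.1 + y.1, x.2.1 + y.2.1, x.2.2 + y.2.2 + x.1 * y.2.1)⟩

instance : One (Heisenberg n) := ⟨((0 : ZMod n), (0 : ZMod n), (0 : ZMod n))⟩

instance : Inv (Heisenberg n) := ⟨fun x => (-x.1, -x.2.1, -x.2.2 + x.1 * x.2.1)⟩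

lemma mul_def (x y : Heisenberg n) :
    x * y = (x.1 + y.1, x.2.1 + y.2.1, x.2.2 + y.2.2 + x.1 * y.2.1) := rfl

lemma one_def : (1 : Heisenberg n) = ((0 : ZMod n), (0 : ZMod n), (0 : ZMod n)) := rfl

lemma inv_def (x : Heisenberg n) :
    x⁻¹ = (-x.1, -x.2.1, -x.2.2 + x.1 * x.2.1) := rfl

instance : Group (Heisenberg n) where
  mul_assoc a b c := by
    rw [mul_def, mul_def, mul_def, mul_def]
    refine Prod.ext ?_ (Prod.ext ?_ ?_) <;> dsimp <;> ring
  one_mul a := by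
    rw [mul_def, one_def]
    refine Prod.ext ?_ (Prod.ext ?_ ?_) <;> dsimp <;> ring
  mul_one a := by
    rw [mul_def, one_def]
    refine Prod.ext ?_ (Prod.ext ?_ ?_) <;> dsimp <;> ring
  inv_mul_cancel a := by
    rw [mul_def, inv_def, one_def]
    refine Prod.ext ?_ (Prod.ext ?_ ?_) <;> dsimp <;> ring

end Heisenberg

/-- A group `Γ` is Jordan if there is a constant `C > 0` such that every finite subgroup
`G ≤ Γ` has an abelian subgroup `A ≤ G` of index at most `C`. -/
def JordanGroup (Γ : Type*) [Group Γ] : Prop :=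
  ∃ C : ℕ, 0 < C ∧ ∀ G : Subgroup Γ, Finite G →
    ∃ A : Subgroup G, (∀ x ∈ A, ∀ y ∈ A, x * y = y * x) ∧ A.index ≤ C

theorem IsPGroup.le_index_of_ne_top {p : ℕ} [Fact p.Prime] {G : Type*} [Group G] [Finite G]
    (hG : IsPGroup p G) {H : Subgroup G} (hH : H ≠ ⊤) : p ≤ H.index := by
  obtain ⟨k, hk⟩ := hG.index H
  rcases k with _ | k
  · exact absurd (Subgroup.index_eq_one.mp (by simpa using hk)) hH
  · exact hk ▸ Nat.le_self_pow k.succ_ne_zero p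

namespace Heisenberg

variable {n : ℕ}

instance [NeZero n] : Finite (Heisenberg n) :=
  inferInstanceAs (Finite (ZMod n × ZMod n × ZMod n))

theorem card : Nat.card (Heisenberg n) = n ^ 3 := by
  rw [show Nat.card (Heisenberg n) = Nat.card (ZMod n × ZMod n × ZMod n) from rfl,
    Nat.card_prod, Nat.card_prod, Nat.card_zmod]
  ring

theorem isPGroup (p : ℕ) [Fact p.Prime] : IsPGroup p (Heisenberg p) :=
  IsPGroup.of_card card

theorem exists_not_commute (hn : n ≠ 1) : ∃ x y : Heisenberg n, ¬ Commute x y := by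
  have : Nontrivial (ZMod n) := ZMod.nontrivial_iff.mpr hn
  refine ⟨(1, 0, 0), (0, 1, 0), fun h => ?_⟩
  have h₃ : (0 : ZMod n) + 0 + 1 * 1 = 0 + 0 + 0 * 0 :=
    congrArg (fun z : Heisenberg n => z.2.2) h.eq
  simp at h₃

end Heisenberg

theorem JordanGroup.exists_index_le {Γ : Type*} [Group Γ] (hΓ : JordanGroup Γ) :
    ∃ C : ℕ, ∀ (G : Type*) [Group G] [Finite G],
      (∃ H : Subgroup Γ, Nonempty (H ≃* G)) →
        ∃ A : Subgroup G, (∀ x ∈ A, ∀ y ∈ A, Commute x y) ∧ A.index ≤ C := by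
  obtain ⟨C, -, hC⟩ := hΓ
  refine ⟨C, fun G _ _ ⟨H, ⟨e⟩⟩ => ?_⟩
  have : Finite H := Finite.of_equiv G e.symm.toEquiv
  obtain ⟨A, hA, hAC⟩ := hC H this
  refine ⟨A.map e.toMonoidHom, ?_, (Subgroup.index_map_equiv A e).trans_le hAC⟩
  rintro _ ⟨a, ha, rfl⟩ _ ⟨b, hb, rfl⟩
  exact (Commute.map (hA a ha b hb) e.toMonoidHom :)

/-- A group containing, for every `n ≥ 1`, a subgroup isomorphic to the mod-`n`
Heisenberg group is not Jordan. -/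
theorem not_isJordan_of_heisenberg_subgroups (Γ : Type*) [Group Γ]
    (h : ∀ n : ℕ, 1 ≤ n → ∃ H : Subgroup Γ, Nonempty (H ≃* Heisenberg n)) :
    ¬ JordanGroup Γ := by
  intro hΓ
  obtain ⟨C, hC⟩ := hΓ.exists_index_le
  obtain ⟨p, hCp, hp⟩ := Nat.exists_infinite_primes (C + 1)
  have : Fact p.Prime := ⟨hp⟩
  obtain ⟨A, hA, hAC⟩ := hC (Heisenberg p) (h p hp.one_le)
  have hA_top : A = ⊤ := by
    by_contra hne
    have := (Heisenberg.isPGroup p).le_index_of_ne_top hne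
    omega
  obtain ⟨x, y, hxy⟩ := Heisenberg.exists_not_commute hp.one_lt.ne'
  exact hxy (hA x (hA_top ▸ Subgroup.mem_top x) y (hA_top ▸ Subgroup.mem_top y))
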